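/- arXiv:2004.05406 — 2 statements merged into one kernel-verified Lean document; each statement's English description precedes it below -/
import Mathlib

section
/- Let U_1,…,U_N : ℝ → ℂ^{d×d} solve dU_j/dt = κ (U_c U_j† U_j − U_j U_c† U_j), where U_c := (1/N) Σ_k U_k. Then U_j(t)† U_j(t) is constant in time for each j. -/
/-! Along `U' = F(U)` one has `(Uᴴ U)' = F(U)ᴴ U + Uᴴ F(U)`, and for the Lohe field
`F(U) = κ (X Uᴴ U - U Xᴴ U)` this vanishes identically in `U` and `X`: the two cross terms
`Uᴴ X Uᴴ U` and `Uᴴ U Xᴴ U` each appear once with each sign. -/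

open Matrix

attribute [local instance] Matrix.linftyOpNormedRing Matrix.linftyOpNormedAlgebra
  Matrix.linftyOpNormedSpace

theorem star_mul_self_eq_of_hasDerivAt {A : Type*} [NormedRing A] [NormedAlgebra ℝ A]
    [StarRing A] [StarModule ℝ A] [ContinuousStar A] {u u' : ℝ → A}
    (hu : ∀ t, HasDerivAt u (u' t) t) (hskew : ∀ t, star (u' t) * u t + star (u t) * u' t = 0)
    (t s : ℝ) : star (u t) * u t = star (u s) * u s := by
  have hderiv (r : ℝ) : HasDerivAt (fun r => star (u r) * u r) 0 r :=
    hskew r ▸ (hu r).star.mul (hu r)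
  exact is_const_of_deriv_eq_zero (fun r => (hderiv r).differentiableAt)
    (fun r => (hderiv r).deriv) t s

section Lohe

variable {R : Type*} [Ring R] [StarRing R]

def loheField [Algebra ℝ R] (κ : ℝ) (X U : R) : R :=
  κ • (X * star U * U - U * star X * U)

theorem star_mul_add_star_mul_lohe_eq_zero (X U : R) :
    star (X * star U * U - U * star X * U) * U + star U * (X * star U * U - U * star X * U) = 0 := by
  simp only [star_sub, star_mul, star_star, sub_mul, mul_sub, mul_assoc]
  abel

theorem star_loheField_mul_add_star_mul_loheField [Algebra ℝ R] [StarModule ℝ R]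
    (κ : ℝ) (X U : R) : star (loheField κ X U) * U + star U * loheField κ X U = 0 := by
  rw [loheField, star_smul, star_trivial, smul_mul_assoc, mul_smul_comm, ← smul_add,
    star_mul_add_star_mul_lohe_eq_zero, smul_zero]

end Lohe

instance Matrix.linftyOp_continuousStar {n 𝕜 : Type*} [Fintype n] [DecidableEq n] [RCLike 𝕜] :
    @ContinuousStar (Matrix n n 𝕜) PseudoMetricSpace.toUniformSpace.toTopologicalSpace _ :=
  ⟨continuous_id.matrix_conjTranspose⟩

theorem stmt_8_general {d N : ℕ} (κ : ℝ) (U : Fin N → ℝ → Matrix (Fin d) (Fin d) ℂ)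
    (Uc : ℝ → Matrix (Fin d) (Fin d) ℂ)
    (hU : ∀ j t, HasDerivAt (U j)
      (κ • (Uc t * (U j t)ᴴ * U j t - U j t * (Uc t)ᴴ * U j t)) t) :
    ∀ j t, (U j t)ᴴ * U j t = (U j 0)ᴴ * U j 0 := fun j t =>
  star_mul_self_eq_of_hasDerivAt (u' := fun s => loheField κ (Uc s) (U j s)) (hU j)
    (fun s => star_loheField_mul_add_star_mul_loheField κ (Uc s) (U j s)) t 0

theorem stmt_8 {d N : ℕ} (κ : ℝ) (U : Fin N → ℝ → Matrix (Fin d) (Fin d) ℂ)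
    (Uc : ℝ → Matrix (Fin d) (Fin d) ℂ)
    (hUc : ∀ t, Uc t = (N : ℂ)⁻¹ • ∑ k, U k t)
    (hU : ∀ j t, HasDerivAt (U j)
      (κ • (Uc t * (U j t)ᴴ * U j t - U j t * (Uc t)ᴴ * U j t)) t) :
    ∀ j t, (U j t)ᴴ * U j t = (U j 0)ᴴ * U j 0 :=
  stmt_8_general κ U Uc hU
end

section
/- Barbalat's lemma: if f : [0,∞) → ℝ is uniformly continuous and lim_{t→∞} ∫_0^t f(s) ds exists (is finite), then lim_{t→∞} f(t) = 0. -/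
/-!
If `|f t| ≥ ε` at a large time `t`, uniform continuity keeps `f` within `ε / 2` of `f t` on a
window `[t, t + η]` of fixed length, so `|∫ f|` over that window is at least `η ε / 2`. But the
window integrals are differences of `∫₀ᵗ f` at two times, and these tend to `L - L = 0`.
-/

open Filter Set MeasureTheory Topology

lemma abs_mul_sub_integral_le {f : ℝ → ℝ} {a b C : ℝ} (hab : a ≤ b)
    (hf : IntervalIntegrable f volume a b) (hC : ∀ s ∈ Ioc a b, |f s - f a| ≤ C) :
    |(b - a) * f a - ∫ s in a..b, f s| ≤ (b - a) * C := by
  have hsplit : ∫ s in a..b, (f s - f a) = (∫ s in a..b, f s) - (b - a) * f a := by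
    rw [intervalIntegral.integral_sub hf intervalIntegrable_const, intervalIntegral.integral_const,
      smul_eq_mul]
  have hbound : ‖∫ s in a..b, (f s - f a)‖ ≤ C * |b - a| :=
    intervalIntegral.norm_integral_le_of_norm_le_const (by rw [uIoc_of_le hab]; exact hC)
  rw [Real.norm_eq_abs] at hbound
  rw [abs_sub_comm, ← hsplit]
  rwa [abs_of_nonneg (sub_nonneg.mpr hab), mul_comm] at hbound

lemma tendsto_integral_add_const_sub_of_tendsto_integral {f : ℝ → ℝ} {a L : ℝ}
    (hint : ∀ᶠ t in atTop, IntervalIntegrable f volume a t)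
    (hL : Tendsto (fun t => ∫ s in a..t, f s) atTop (𝓝 L)) (h : ℝ) :
    Tendsto (fun t => ∫ s in t..t + h, f s) atTop (𝓝 0) := by
  have hshift : Tendsto (fun t => t + h) atTop atTop := tendsto_atTop_add_const_right _ h tendsto_id
  have hdiff := (hL.comp hshift).sub hL
  rw [sub_self] at hdiff
  refine hdiff.congr' ?_
  filter_upwards [hint, hshift.eventually hint] with t ht hth
  exact intervalIntegral.integral_interval_sub_left hth ht

lemma tendsto_zero_of_uniformContinuousOn_of_tendsto_integral_add_const {f : ℝ → ℝ} {a : ℝ}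
    (hf : UniformContinuousOn f (Ici a))
    (hwin : ∀ h > 0, Tendsto (fun t => ∫ s in t..t + h, f s) atTop (𝓝 0)) :
    Tendsto f atTop (𝓝 0) := by
  rw [Metric.tendsto_nhds]
  intro ε hε
  obtain ⟨η, hη, hclose⟩ := Metric.uniformContinuousOn_iff_le.mp hf (ε / 2) (half_pos hε)
  have hsmall := Metric.tendsto_nhds.mp (hwin η hη) (η * ε / 2) (by positivity)
  filter_upwards [hsmall, eventually_ge_atTop a] with t hwin_t hat
  have hwindow : |(t + η - t) * f t - ∫ s in t..t + η, f s| ≤ (t + η - t) * (ε / 2) := by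
    refine abs_mul_sub_integral_le (by linarith) ?_ fun s hs => ?_
    · exact (hf.continuousOn.mono (Icc_subset_Ici_self.trans (Ici_subset_Ici.mpr hat))
        ).intervalIntegrable_of_Icc (by linarith)
    · rw [← Real.dist_eq]
      refine hclose s (hat.trans hs.1.le) t hat ?_
      rw [Real.dist_eq, abs_of_pos (by linarith [hs.1])]
      linarith [hs.2]
  rw [Real.dist_eq, sub_zero] at hwin_t ⊢
  rw [add_sub_cancel_left] at hwindow
  have htriangle := abs_sub_abs_le_abs_sub (η * f t) (∫ s in t..t + η, f s)
  rw [abs_mul, abs_of_pos hη] at htriangle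
  exact lt_of_mul_lt_mul_left (by linarith : η * |f t| < η * ε) hη.le

theorem stmt_17 (f : ℝ → ℝ)
    (hf : UniformContinuousOn f (Set.Ici (0 : ℝ)))
    (L : ℝ)
    (hL : Tendsto (fun t => ∫ s in (0 : ℝ)..t, f s) atTop (nhds L)) :
    Tendsto f atTop (nhds 0) := by
  have hint : ∀ᶠ t in atTop, IntervalIntegrable f volume 0 t := by
    filter_upwards [eventually_ge_atTop 0] with t ht
    exact (hf.continuousOn.mono Icc_subset_Ici_self).intervalIntegrable_of_Icc ht
  exact tendsto_zero_of_uniformContinuousOn_of_tendsto_integral_add_const hf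
    fun h _ => tendsto_integral_add_const_sub_of_tendsto_integral hint hL h
end
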